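/- Let F be a field of characteristic p > 2, let m ≥ 1, and let λ = (λ_1, …, λ_{2m+1}) ∈ F^{2m+1}. Define the map g ↦ g^{[p]} on the Heisenberg Lie algebra h_m by g^{[p]} = (Σ_{i=1}^{2m+1} a_i^p λ_i) e_{2m+1} for g = Σ_{i=1}^{2m+1} a_i e_i. Then this map satisfies the axioms of a restricted Lie algebra structure on h_m: (a·g)^{[p]} = a^p g^{[p]} for all a ∈ F and g ∈ h_m; (g+h)^{[p]} = g^{[p]} + h^{[p]} for all g,h ∈ h_m (the Jacobson correction terms vanish because h_m is 2-step nilpotent and p ≥ 3); and ad(g^{[p]}) = (ad g)^p = 0 for all g ∈ h_m, where ad(x) is the map y ↦ [x,y]. -/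

import Mathlib

/-!
The Heisenberg algebra is 2-step nilpotent: every bracket of basis vectors is a multiple of the
central vector `e_{2m+1}`, so `⁅x, ⁅y, z⁆⁆ = 0` throughout and `(ad g)^p = 0` already because
`(ad g)^2 = 0`. The map `g ↦ g^{[p]}` is a fixed vector times a sum of `p`-th powers of
coordinates, so it is `p`-homogeneous, and additive by the Frobenius identity `(a + b)^p = a^p + b^p`;
its values are central, hence have zero adjoint.
-/

open Module

section TwoStepNilpotent

variable {R L ι : Type*} [CommRing R] [LieRing L] [LieAlgebra R L] (b : Basis ι R L)

theorem lie_eq_zero_of_basis_lie_eq_zero {z : L} (h : ∀ i, ⁅b i, z⁆ = 0) (x : L) :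
    ⁅x, z⁆ = 0 := by
  have hz : LieAlgebra.ad R L z = 0 :=
    b.ext fun i => by rw [LieAlgebra.ad_apply, ← lie_skew, h, neg_zero, LinearMap.zero_apply]
  rw [← lie_skew, ← LieAlgebra.ad_apply R, hz, LinearMap.zero_apply, neg_zero]

theorem lie_lie_eq_zero_of_lie_basis_lie_eq_zero (h : ∀ (x : L) (j k : ι), ⁅x, ⁅b j, b k⁆⁆ = 0)
    (x y z : L) : ⁅x, ⁅y, z⁆⁆ = 0 := by
  have hx : (LieAlgebra.ad R L : L →ₗ[R] End R L).compr₂ (LieAlgebra.ad R L x) = 0 :=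
    LinearMap.ext_basis b b fun j k => h x j k
  simpa using LinearMap.congr_fun₂ hx y z

theorem LieAlgebra.ad_pow_eq_zero_of_lie_lie_eq_zero (h : ∀ x y z : L, ⁅x, ⁅y, z⁆⁆ = 0)
    {n : ℕ} (hn : 2 ≤ n) (x : L) : LieAlgebra.ad R L x ^ n = 0 := by
  refine pow_eq_zero_of_le hn (LinearMap.ext fun y => ?_)
  simpa [pow_two] using h x x y

end TwoStepNilpotent

section Heisenberg

variable {R L : Type*} [CommRing R] [LieRing L] [LieAlgebra R L] {m : ℕ}

/-- The bracket table `⁅e_i, e_{m+i}⁆ = e_{2m+1}` of `h_m`, with `Fin` indices shifted down by one. -/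
def IsHeisenbergBasis (b : Basis (Fin (2*m+1)) R L) : Prop :=
  ∀ i j : Fin (2*m+1), ⁅b i, b j⁆ =
    if (j : ℕ) = (i : ℕ) + m ∧ (i : ℕ) < m then b (Fin.last (2*m))
    else if (i : ℕ) = (j : ℕ) + m ∧ (j : ℕ) < m then - b (Fin.last (2*m))
    else 0

namespace IsHeisenbergBasis

variable {b : Basis (Fin (2*m+1)) R L}

theorem lie_last (hb : IsHeisenbergBasis b) (x : L) : ⁅x, b (Fin.last (2*m))⁆ = 0 :=
  lie_eq_zero_of_basis_lie_eq_zero b (fun i => by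
    rw [hb, if_neg (by simp only [Fin.val_last]; omega),
      if_neg (by simp only [Fin.val_last]; omega)]) x

theorem last_lie (hb : IsHeisenbergBasis b) (x : L) : ⁅b (Fin.last (2*m)), x⁆ = 0 := by
  rw [← lie_skew, hb.lie_last, neg_zero]

theorem lie_lie_eq_zero (hb : IsHeisenbergBasis b) (x y z : L) : ⁅x, ⁅y, z⁆⁆ = 0 :=
  lie_lie_eq_zero_of_lie_basis_lie_eq_zero b (fun x j k => by
    rw [hb]; split_ifs <;> simp [hb.lie_last]) x y z

end IsHeisenbergBasis

end Heisenberg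

section PowCoordSum

variable {R M ι : Type*} [CommRing R] [AddCommGroup M] [Module R M] [Fintype ι]

/-- The coefficient of `e_{2m+1}` in `g^{[p]}`. -/
noncomputable def powCoordSum (b : Basis ι R M) (p : ℕ) (lam : ι → R) (g : M) : R :=
  ∑ i, b.repr g i ^ p * lam i

variable (b : Basis ι R M) (p : ℕ) (lam : ι → R)

theorem powCoordSum_smul (a : R) (g : M) :
    powCoordSum b p lam (a • g) = a ^ p * powCoordSum b p lam g := by
  simp only [powCoordSum, Finset.mul_sum, map_smul, Finsupp.smul_apply, smul_eq_mul, mul_pow,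
    mul_assoc]

theorem powCoordSum_add [ExpChar R p] (g h : M) :
    powCoordSum b p lam (g + h) = powCoordSum b p lam g + powCoordSum b p lam h := by
  simp only [powCoordSum, ← Finset.sum_add_distrib, map_add, Finsupp.add_apply, add_pow_expChar,
    add_mul]

end PowCoordSum

theorem heisenberg_restricted_structure_p_gt_two_general
    (F : Type*) [Field F] (p : ℕ) [CharP F p] (hp : p.Prime)
    (m : ℕ)
    (L : Type*) [LieRing L] [LieAlgebra F L]
    (b : Module.Basis (Fin (2*m+1)) F L)
    (hb : ∀ i j : Fin (2*m+1), ⁅b i, b j⁆ =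
      if (j : ℕ) = (i : ℕ) + m ∧ (i : ℕ) < m then b (Fin.last (2*m))
      else if (i : ℕ) = (j : ℕ) + m ∧ (j : ℕ) < m then - b (Fin.last (2*m))
      else 0)
    (lam : Fin (2*m+1) → F)
    (P : L → L)
    (hP : ∀ g : L, P g = (∑ i, (b.repr g i)^p * lam i) • b (Fin.last (2*m))) :
    (∀ (a : F) (g : L), P (a • g) = a^p • P g) ∧
    (∀ g h : L, P (g + h) = P g + P h) ∧
    (∀ g : L, LieAlgebra.ad F L (P g) = 0 ∧ (LieAlgebra.ad F L g)^p = 0) := by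
  have hb : IsHeisenbergBasis b := hb
  have : ExpChar F p := ExpChar.prime hp
  obtain rfl : P = fun g => powCoordSum b p lam g • b (Fin.last (2*m)) := funext hP
  refine ⟨fun a g => ?_, fun g h => ?_, fun g => ⟨?_, ?_⟩⟩
  · simp only [powCoordSum_smul, mul_smul]
  · simp only [powCoordSum_add, add_smul]
  · ext y
    simp [hb.last_lie]
  · exact LieAlgebra.ad_pow_eq_zero_of_lie_lie_eq_zero hb.lie_lie_eq_zero hp.two_le g

/-- Let `F` be a field of characteristic `p > 2`, let `m ≥ 1`, and let
`λ ∈ F^{2m+1}`.  Define `g^{[p]} = (Σ_i a_i^p λ_i) e_{2m+1}` for `g = Σ_i a_i e_i` in the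
Heisenberg Lie algebra `h_m`.  Then this map satisfies the axioms of a restricted Lie
algebra structure on `h_m`: `(a•g)^{[p]} = a^p g^{[p]}`, `(g+h)^{[p]} = g^{[p]} + h^{[p]}`
(the Jacobson correction terms vanish), and `ad(g^{[p]}) = (ad g)^p = 0` for all `g`. -/
theorem heisenberg_restricted_structure_p_gt_two
    (F : Type*) [Field F] (p : ℕ) [CharP F p] (hp : p.Prime) (hp2 : 2 < p)
    (m : ℕ) (hm : 1 ≤ m)
    (L : Type*) [LieRing L] [LieAlgebra F L]
    (b : Module.Basis (Fin (2*m+1)) F L)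
    (hb : ∀ i j : Fin (2*m+1), ⁅b i, b j⁆ =
      if (j : ℕ) = (i : ℕ) + m ∧ (i : ℕ) < m then b (Fin.last (2*m))
      else if (i : ℕ) = (j : ℕ) + m ∧ (j : ℕ) < m then - b (Fin.last (2*m))
      else 0)
    (lam : Fin (2*m+1) → F)
    (P : L → L)
    (hP : ∀ g : L, P g = (∑ i, (b.repr g i)^p * lam i) • b (Fin.last (2*m))) :
    (∀ (a : F) (g : L), P (a • g) = a^p • P g) ∧
    (∀ g h : L, P (g + h) = P g + P h) ∧
    (∀ g : L, LieAlgebra.ad F L (P g) = 0 ∧ (LieAlgebra.ad F L g)^p = 0) :=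
  heisenberg_restricted_structure_p_gt_two_general F p hp m L b hb lam P hP
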